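/- arXiv:1611.00651 — 4 statements merged into one kernel-verified Lean document; each statement's English description precedes it below -/
import Mathlib

section
/- Let d ≥ 1, M ≥ 1, and let a, b : Fin M → ZMod d be deterministic assignments, with the convention a_{M+1} := a_1 + 1 (indices cyclic). Then the deterministic BKP value ∑_{x=1}^{M} ( (a_x - b_x).val + (b_x - a_{x+1}).val ) is at least d - 1. -/
/-- Classical (local deterministic) bound of the BKP Bell inequality: for deterministic
assignments `a b : Fin M → ZMod d` with the convention `a_{M+1} = a_1 + 1`, the BKP value
is at least `d - 1`. -/
theorem bkp_deterministic_bound (d M : ℕ) (hd : 1 ≤ d) (hM : 1 ≤ M)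
    (a b : Fin M → ZMod d) :
    d - 1 ≤ ∑ x : Fin M,
      ((a x - b x).val +
        (b x - (if h : (x : ℕ) + 1 < M then a ⟨(x : ℕ) + 1, h⟩ else a ⟨0, hM⟩ + 1)).val) := by
  rcases Nat.lt_or_ge d 2 with hd1 | hd2
  · interval_cases d
    · simp
  · haveI : NeZero d := ⟨by omega⟩
    haveI : NeZero M := ⟨by omega⟩
    set S : ℕ := ∑ x : Fin M,
      ((a x - b x).val +
        (b x - (if h : (x : ℕ) + 1 < M then a ⟨(x : ℕ) + 1, h⟩ else a ⟨0, hM⟩ + 1)).val)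
      with hSdef
    have hlast : M - 1 < M := by omega
    have hnext : ∀ x : Fin M,
        (if h : (x : ℕ) + 1 < M then a ⟨(x : ℕ) + 1, h⟩ else a ⟨0, hM⟩ + 1)
          = a (x + 1) + (if x = ⟨M - 1, hlast⟩ then 1 else 0) := by
      intro x
      by_cases h : (x : ℕ) + 1 < M
      · rw [dif_pos h, if_neg, add_zero]
        · congr 1
          apply Fin.ext
          simp [Fin.add_def, Nat.mod_eq_of_lt h]
        · intro hx
          rw [hx] at h
          simp at h
          omega
      · have hx : x = ⟨M - 1, hlast⟩ := by
          apply Fin.ext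
          have := x.isLt
          simp only []
          omega
        rw [dif_neg h, if_pos hx]
        congr 2
        subst hx
        obtain ⟨m, rfl⟩ : ∃ m, M = m + 1 := ⟨M - 1, by omega⟩
        have hl : (⟨m + 1 - 1, hlast⟩ : Fin (m + 1)) = Fin.last m := by
          apply Fin.ext; simp
        rw [hl, Fin.last_add_one]
        rfl
    have hsum : ((S : ℕ) : ZMod d) = -1 := by
      rw [hSdef]
      push_cast [ZMod.natCast_val, ZMod.cast_id]
      have : ∀ x : Fin M, a x - b x + (b x -
          (if h : (x : ℕ) + 1 < M then a ⟨(x : ℕ) + 1, h⟩ else a ⟨0, hM⟩ + 1))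
          = a x - (a (x + 1) + (if x = ⟨M - 1, hlast⟩ then 1 else 0)) := by
        intro x
        rw [sub_add_sub_cancel, hnext x]
      rw [Finset.sum_congr rfl fun x _ => this x]
      rw [Finset.sum_sub_distrib, Finset.sum_add_distrib]
      have h1 : ∑ x : Fin M, a (x + 1) = ∑ x : Fin M, a x :=
        Fintype.sum_equiv (Equiv.addRight 1) _ _ (fun x => rfl)
      have h2 : (∑ x : Fin M, (if x = (⟨M - 1, hlast⟩ : Fin M) then (1 : ZMod d) else 0)) = 1 := by
        simp
      rw [h1, h2]
      ring
    have hmod : S % d = d - 1 := by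
      have := ZMod.val_natCast (n := d) S
      rw [hsum] at this
      rw [← this]
      have : (-1 : ZMod d) = ((d - 1 : ℕ) : ZMod d) := by
        have : ((d : ℕ) : ZMod d) = 0 := ZMod.natCast_self d
        push_cast [Nat.cast_sub hd]
        simp
      rw [this, ZMod.val_natCast, Nat.mod_eq_of_lt (by omega)]
    calc d - 1 = S % d := hmod.symm
      _ ≤ S := Nat.mod_le S d
end

section
/- Let d ≥ 1, M ≥ 2, and let a, b : Fin M → ZMod d with the convention a_{M+1} := a_1 + 1. Then the deterministic BKP expression decomposes as ∑_{x=1}^{M} ((a_x - b_x).val + (b_x - a_{x+1}).val) = ∑_{i=1}^{M-1} [ (a_1 - b_i).val + (b_i - a_{i+1}).val + (a_{i+1} - b_{i+1}).val + (b_{i+1} - a_1 - 1).val ] - (M-2)(d-1) (as an identity of integers). -/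
open Finset

lemma key (d : ℕ) (hd : 1 ≤ d) (x y : ZMod d) (h : x + y = -1) :
    ((x.val : ℤ) + (y.val : ℤ)) = (d : ℤ) - 1 := by
  haveI : NeZero d := ⟨by omega⟩
  have hx := ZMod.val_lt x
  have hk : d - 1 - x.val < d := by omega
  have hcast : ((d - 1 - x.val : ℕ) : ZMod d) = y := by
    have hsum : (d - 1 - x.val) + 1 + x.val = d := by omega
    have : (((d - 1 - x.val) + 1 + x.val : ℕ) : ZMod d) = ((d : ℕ) : ZMod d) := by
      rw [hsum]
    simp only [Nat.cast_add, Nat.cast_one, ZMod.natCast_self, ZMod.natCast_val,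
      ZMod.cast_id] at this
    have hy : y = -1 - x := by linear_combination h
    rw [hy]
    linear_combination this
  have := ZMod.val_cast_of_lt hk
  rw [hcast] at this
  omega

/-- Decomposition of the deterministic `M`-input BKP Bell expression into `M-1` CGLMP
(2-input) expressions, as an identity of integers (Eq. (14) of the paper). -/
theorem bkp_decomposition (d M : ℕ) (hd : 1 ≤ d) (hM : 2 ≤ M) (a b : Fin M → ZMod d) :
    (∑ x : Fin M,
        (((a x - b x).val : ℤ) +
          ((b x - (if h : (x : ℕ) + 1 < M then a ⟨(x : ℕ) + 1, h⟩
              else a ⟨0, by omega⟩ + 1)).val : ℤ)))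
      = (∑ i : Fin (M - 1),
          (((a ⟨0, by omega⟩ - b ⟨(i : ℕ), by have := i.isLt; omega⟩).val : ℤ)
            + ((b ⟨(i : ℕ), by have := i.isLt; omega⟩
                - a ⟨(i : ℕ) + 1, by have := i.isLt; omega⟩).val : ℤ)
            + ((a ⟨(i : ℕ) + 1, by have := i.isLt; omega⟩
                - b ⟨(i : ℕ) + 1, by have := i.isLt; omega⟩).val : ℤ)
            + ((b ⟨(i : ℕ) + 1, by have := i.isLt; omega⟩
                - a ⟨0, by omega⟩ - 1).val : ℤ)))
        - ((M : ℤ) - 2) * ((d : ℤ) - 1) := by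
  have hM0 : 0 < M := by omega
  set A : ℕ → ZMod d := fun i => a ⟨i % M, Nat.mod_lt _ hM0⟩ with hA
  set B : ℕ → ZMod d := fun i => b ⟨i % M, Nat.mod_lt _ hM0⟩ with hB
  have ha : ∀ (i : ℕ) (h : i < M), a ⟨i, h⟩ = A i := by
    intro i h; simp only [hA]; congr 1; exact Fin.ext (Nat.mod_eq_of_lt h).symm
  have hb : ∀ (i : ℕ) (h : i < M), b ⟨i, h⟩ = B i := by
    intro i h; simp only [hB]; congr 1; exact Fin.ext (Nat.mod_eq_of_lt h).symm
  -- LHS as a range sum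
  have hL : (∑ x : Fin M,
        (((a x - b x).val : ℤ) +
          ((b x - (if h : (x : ℕ) + 1 < M then a ⟨(x : ℕ) + 1, h⟩
              else a ⟨0, by omega⟩ + 1)).val : ℤ)))
      = ∑ x ∈ range M, (((A x - B x).val : ℤ) +
          ((B x - (if x + 1 < M then A (x + 1) else A 0 + 1)).val : ℤ)) := by
    rw [← Fin.sum_univ_eq_sum_range (fun x => (((A x - B x).val : ℤ) +
          ((B x - (if x + 1 < M then A (x + 1) else A 0 + 1)).val : ℤ)))]
    apply Finset.sum_congr rfl
    intro x _
    rw [ha x.1 x.isLt, hb x.1 x.isLt]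
    congr 2
    split_ifs with h
    · rw [ha _ h]
    · rw [ha 0 hM0]
  -- RHS sum as a range sum
  have hR : (∑ i : Fin (M - 1),
          (((a ⟨0, by omega⟩ - b ⟨(i : ℕ), by have := i.isLt; omega⟩).val : ℤ)
            + ((b ⟨(i : ℕ), by have := i.isLt; omega⟩
                - a ⟨(i : ℕ) + 1, by have := i.isLt; omega⟩).val : ℤ)
            + ((a ⟨(i : ℕ) + 1, by have := i.isLt; omega⟩
                - b ⟨(i : ℕ) + 1, by have := i.isLt; omega⟩).val : ℤ)
            + ((b ⟨(i : ℕ) + 1, by have := i.isLt; omega⟩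
                - a ⟨0, by omega⟩ - 1).val : ℤ)))
      = ∑ i ∈ range (M - 1), (((A 0 - B i).val : ℤ) + ((B i - A (i + 1)).val : ℤ)
            + ((A (i + 1) - B (i + 1)).val : ℤ) + ((B (i + 1) - A 0 - 1).val : ℤ)) := by
    rw [← Fin.sum_univ_eq_sum_range (fun i => (((A 0 - B i).val : ℤ) + ((B i - A (i + 1)).val : ℤ)
            + ((A (i + 1) - B (i + 1)).val : ℤ) + ((B (i + 1) - A 0 - 1).val : ℤ)))]
    apply Finset.sum_congr rfl
    intro i _
    have hi := i.isLt
    rw [ha 0 hM0, hb i.1 (by omega), ha (i.1 + 1) (by omega), hb (i.1 + 1) (by omega)]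
  rw [hL, hR]
  obtain ⟨n, rfl⟩ : ∃ n, M = n + 2 := ⟨M - 2, by omega⟩
  simp only [show n + 2 - 1 = n + 1 from rfl]
  rw [Finset.sum_range_succ (fun x => (((A x - B x).val : ℤ) +
          ((B x - (if x + 1 < n + 2 then A (x + 1) else A 0 + 1)).val : ℤ))) (n + 1)]
  simp only [lt_irrefl, if_neg (by omega : ¬ (n + 1 + 1 < n + 2))]
  have hite : (∑ x ∈ range (n + 1), (((A x - B x).val : ℤ) +
      ((B x - (if x + 1 < n + 2 then A (x + 1) else A 0 + 1)).val : ℤ)))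
    = ∑ x ∈ range (n + 1), (((A x - B x).val : ℤ) + ((B x - A (x + 1)).val : ℤ)) := by
    apply Finset.sum_congr rfl
    intro x hx
    rw [if_pos (by have := Finset.mem_range.mp hx; omega : x + 1 < n + 2)]
  rw [hite]
  simp only [Finset.sum_add_distrib]
  have h1 : ∑ i ∈ range (n + 1), ((A 0 - B i).val : ℤ)
      = ((A 0 - B 0).val : ℤ) + ∑ i ∈ range n, ((A 0 - B (i + 1)).val : ℤ) := by
    rw [Finset.sum_range_succ']; ring
  have h2 : ∑ i ∈ range (n + 1), ((B (i + 1) - A 0 - 1).val : ℤ)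
      = ((B (n + 1) - A 0 - 1).val : ℤ)
        + ∑ i ∈ range n, ((B (i + 1) - A 0 - 1).val : ℤ) := by
    rw [Finset.sum_range_succ]; ring
  have h3 : ∑ i ∈ range (n + 1), ((A (i + 1) - B (i + 1)).val : ℤ)
      = ∑ i ∈ range (n + 2), ((A i - B i).val : ℤ) - ((A 0 - B 0).val : ℤ) := by
    rw [Finset.sum_range_succ' (fun i => ((A i - B i).val : ℤ)) (n + 1)]; ring
  have h4 : ∑ i ∈ range (n + 2), ((A i - B i).val : ℤ)
      = ∑ i ∈ range (n + 1), ((A i - B i).val : ℤ)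
        + ((A (n + 1) - B (n + 1)).val : ℤ) := by
    rw [Finset.sum_range_succ]
  have hzero : ∑ i ∈ range n, (((A 0 - B (i + 1)).val : ℤ)
        + ((B (i + 1) - A 0 - 1).val : ℤ)) = (n : ℤ) * ((d : ℤ) - 1) := by
    rw [Finset.sum_congr rfl (fun i _ => key d hd _ _ (by ring))]
    simp [mul_comm]; ring
  rw [Finset.sum_add_distrib] at hzero
  have hsub : ((B (n + 1) - (A 0 + 1)).val : ℤ) = ((B (n + 1) - A 0 - 1).val : ℤ) := by
    rw [sub_add_eq_sub_sub]
  rw [h1, h2, h3, h4]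
  push_cast
  linarith [hzero, hsub]
end

section
/- Let d ≥ 2 and let p(abc|xyz) be a tripartite no-signaling distribution where A has 2 inputs with d outcomes, and B and C each have a single d-outcome measurement. Then ⟨A_1 - B⟩ + ⟨B - A_2⟩ + ⟨A_2 - C⟩ + ⟨C - A_1 - 1⟩ ≥ d - 1, where each ⟨X - Y⟩ is the expectation of the mod-d representative of the outcome difference under the appropriate bipartite marginal. -/
open Finset

noncomputable section

/-- Deterministic bracket `⟨x - y⟩`: the representative in `{0,…,d-1}` of `x - y` mod `d`. -/
def dval (d : ℕ) (x y : Fin d) : ℕ := (((x : ℕ) : ZMod d) - ((y : ℕ) : ZMod d)).val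

/-- Shifted deterministic bracket `⟨x - y - 1⟩` mod `d`. -/
def dvalShift (d : ℕ) (x y : Fin d) : ℕ :=
  (((x : ℕ) : ZMod d) - ((y : ℕ) : ZMod d) - 1).val

lemma aux1 (d : ℕ) [NeZero d] (a b c : Fin d) :
    dvalShift d c b ≤ dval d a b + dvalShift d c a := by
  unfold dval dvalShift
  have h : ((c : ℕ) : ZMod d) - ((b : ℕ) : ZMod d) - 1
      = (((a : ℕ) : ZMod d) - ((b : ℕ) : ZMod d))
        + (((c : ℕ) : ZMod d) - ((a : ℕ) : ZMod d) - 1) := by ring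
  rw [h]; exact ZMod.val_add_le _ _

lemma aux2 (d : ℕ) [NeZero d] (a b c : Fin d) :
    dval d b c ≤ dval d b a + dval d a c := by
  unfold dval
  have h : ((b : ℕ) : ZMod d) - ((c : ℕ) : ZMod d)
      = (((b : ℕ) : ZMod d) - ((a : ℕ) : ZMod d))
        + (((a : ℕ) : ZMod d) - ((c : ℕ) : ZMod d)) := by ring
  rw [h]; exact ZMod.val_add_le _ _

lemma aux3 (d : ℕ) (hd : 2 ≤ d) (b c : Fin d) :
    d - 1 ≤ dvalShift d c b + dval d b c := by
  obtain ⟨n, rfl⟩ : ∃ n, d = n + 1 := ⟨d - 1, by omega⟩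
  unfold dval dvalShift
  have h : (((c : ℕ) : ZMod (n+1)) - ((b : ℕ) : ZMod (n+1)) - 1)
      + (((b : ℕ) : ZMod (n+1)) - ((c : ℕ) : ZMod (n+1))) = -1 := by ring
  have h2 := ZMod.val_add_le (((c : ℕ) : ZMod (n+1)) - ((b : ℕ) : ZMod (n+1)) - 1)
    (((b : ℕ) : ZMod (n+1)) - ((c : ℕ) : ZMod (n+1)))
  rw [h, ZMod.val_neg_one] at h2
  omega

lemma sumsw (d : ℕ) (f : Fin d → Fin d → Fin d → ℝ) :
    ∑ b, ∑ c, ∑ a, f a b c = ∑ a, ∑ b, ∑ c, f a b c := by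
  calc ∑ b, ∑ c, ∑ a, f a b c
      = ∑ b, ∑ a, ∑ c, f a b c := Finset.sum_congr rfl fun b _ => Finset.sum_comm
    _ = ∑ a, ∑ b, ∑ c, f a b c := Finset.sum_comm

/-- CGLMP-type expression distributed among three parties where `A` has two `d`-outcome
measurements and `B`, `C` each have a single one: for any tripartite no-signaling
distribution, `⟨A_1 - B⟩ + ⟨B - A_2⟩ + ⟨A_2 - C⟩ + ⟨C - A_1 - 1⟩ ≥ d - 1`. -/
theorem distributed_cglmp_bound (d : ℕ) (hd : 2 ≤ d)
    (p : Fin d → Fin d → Fin d → Fin 2 → ℝ)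
    (hpos : ∀ a b c x, 0 ≤ p a b c x)
    (hnorm : ∀ x, ∑ a, ∑ b, ∑ c, p a b c x = 1)
    (hns : ∀ b c x x', ∑ a, p a b c x = ∑ a, p a b c x') :
    (d : ℝ) - 1 ≤
      (∑ a, ∑ b, ∑ c, (dval d a b : ℝ) * p a b c 0)
      + (∑ a, ∑ b, ∑ c, (dval d b a : ℝ) * p a b c 1)
      + (∑ a, ∑ b, ∑ c, (dval d a c : ℝ) * p a b c 1)
      + (∑ a, ∑ b, ∑ c, (dvalShift d c a : ℝ) * p a b c 0) := by
  haveI : NeZero d := ⟨by omega⟩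
  set q : Fin d → Fin d → ℝ := fun b c => ∑ a, p a b c 0 with hqdef
  have hq1 : ∀ b c, ∑ a, p a b c 1 = q b c := fun b c => hns b c 1 0
  have hqnn : ∀ b c, 0 ≤ q b c := fun b c => Finset.sum_nonneg fun a _ => hpos a b c 0
  have hnorm0 : ∑ b, ∑ c, q b c = 1 := by
    have := sumsw d (fun a b c => p a b c 0)
    simp only [hqdef]
    rw [this, hnorm 0]
  -- step 1 : (d-1) ≤ ∑ (dvalShift c b + dval b c) q
  have step1 : (d : ℝ) - 1 ≤
      ∑ b, ∑ c, (((dvalShift d c b : ℝ) + (dval d b c : ℝ)) * q b c) := by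
    have : (d : ℝ) - 1 = ∑ b, ∑ c, ((d : ℝ) - 1) * q b c := by
      simp only [← Finset.mul_sum, hnorm0, mul_one]
    rw [this]
    refine Finset.sum_le_sum fun b _ => Finset.sum_le_sum fun c _ => ?_
    refine mul_le_mul_of_nonneg_right ?_ (hqnn b c)
    have h := aux3 d hd b c
    have hd1 : (1 : ℕ) ≤ d := by omega
    calc (d : ℝ) - 1 = ((d - 1 : ℕ) : ℝ) := by
          rw [Nat.cast_sub hd1]; norm_num
      _ ≤ ((dvalShift d c b + dval d b c : ℕ) : ℝ) := by exact_mod_cast h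
      _ = (dvalShift d c b : ℝ) + (dval d b c : ℝ) := by push_cast; ring
  -- part A
  have hA : ∑ b, ∑ c, (dvalShift d c b : ℝ) * q b c ≤
      (∑ a, ∑ b, ∑ c, (dval d a b : ℝ) * p a b c 0)
      + (∑ a, ∑ b, ∑ c, (dvalShift d c a : ℝ) * p a b c 0) := by
    have e1 : ∑ b, ∑ c, (dvalShift d c b : ℝ) * q b c
        = ∑ b, ∑ c, ∑ a, (dvalShift d c b : ℝ) * p a b c 0 := by
      simp only [hqdef, Finset.mul_sum]
    rw [e1]
    have e2 : ∑ b, ∑ c, ∑ a, (dvalShift d c b : ℝ) * p a b c 0 ≤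
        ∑ b, ∑ c, ∑ a, ((dval d a b : ℝ) + (dvalShift d c a : ℝ)) * p a b c 0 := by
      refine Finset.sum_le_sum fun b _ => Finset.sum_le_sum fun c _ =>
        Finset.sum_le_sum fun a _ => mul_le_mul_of_nonneg_right ?_ (hpos a b c 0)
      exact_mod_cast aux1 d a b c
    refine e2.trans (le_of_eq ?_)
    rw [sumsw d (fun a b c => ((dval d a b : ℝ) + (dvalShift d c a : ℝ)) * p a b c 0)]
    simp only [add_mul, Finset.sum_add_distrib]
  -- part B
  have hB : ∑ b, ∑ c, (dval d b c : ℝ) * q b c ≤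
      (∑ a, ∑ b, ∑ c, (dval d b a : ℝ) * p a b c 1)
      + (∑ a, ∑ b, ∑ c, (dval d a c : ℝ) * p a b c 1) := by
    have e1 : ∑ b, ∑ c, (dval d b c : ℝ) * q b c
        = ∑ b, ∑ c, ∑ a, (dval d b c : ℝ) * p a b c 1 := by
      refine Finset.sum_congr rfl fun b _ => Finset.sum_congr rfl fun c _ => ?_
      rw [← hq1 b c, Finset.mul_sum]
    rw [e1]
    have e2 : ∑ b, ∑ c, ∑ a, (dval d b c : ℝ) * p a b c 1 ≤
        ∑ b, ∑ c, ∑ a, ((dval d b a : ℝ) + (dval d a c : ℝ)) * p a b c 1 := by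
      refine Finset.sum_le_sum fun b _ => Finset.sum_le_sum fun c _ =>
        Finset.sum_le_sum fun a _ => mul_le_mul_of_nonneg_right ?_ (hpos a b c 1)
      exact_mod_cast aux2 d a b c
    refine e2.trans (le_of_eq ?_)
    rw [sumsw d (fun a b c => ((dval d b a : ℝ) + (dval d a c : ℝ)) * p a b c 1)]
    simp only [add_mul, Finset.sum_add_distrib]
  have split : ∑ b, ∑ c, (((dvalShift d c b : ℝ) + (dval d b c : ℝ)) * q b c)
      = (∑ b, ∑ c, (dvalShift d c b : ℝ) * q b c)
        + (∑ b, ∑ c, (dval d b c : ℝ) * q b c) := by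
    simp only [add_mul, Finset.sum_add_distrib]
  rw [split] at step1
  linarith
end
end

section
/- Let d ≥ 2 and let p(abc|xyz) be a tripartite no-signaling distribution with 2 inputs and d outcomes per party. Suppose the monogamy relation I_AB^{2,d} + I_AC^{2,d} ≥ 2(d-1) holds for every relabeling of C's measurements of the form C_2 := C_1 + 1 (outcome shift). Then for all i, j ∈ {1,2}: I_AB^{2,d} + ⟨A_i - C_j⟩ + ⟨C_j - A_i⟩ ≥ d - 1, where ⟨X - Y⟩ is the expectation of the mod-d difference representative. -/
open Finset

noncomputable section

/-- The BKP Bell expression `I^{M,d}(p) = ∑_α (⟨A_α - B_α⟩ + ⟨B_α - A_{α+1}⟩)` of a bipartite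
box `p(a,b|x,y)`, with the convention `A_{M+1} = A_1 + 1`. -/
def BKP (d M : ℕ) (hM : 0 < M) (p : Fin d → Fin d → Fin M → Fin M → ℝ) : ℝ :=
  ∑ α : Fin M,
    ((∑ a : Fin d, ∑ b : Fin d, (dval d a b : ℝ) * p a b α α) +
      if h : (α : ℕ) + 1 < M then
        ∑ a : Fin d, ∑ b : Fin d, (dval d b a : ℝ) * p a b ⟨(α : ℕ) + 1, h⟩ α
      else
        ∑ a : Fin d, ∑ b : Fin d, (dvalShift d b a : ℝ) * p a b ⟨0, hM⟩ α)

/-- No-signaling conditions for a tripartite box `p(a,b,c|x,y,z)`. -/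
def NoSignalingTri (d M : ℕ)
    (p : Fin d → Fin d → Fin d → Fin M → Fin M → Fin M → ℝ) : Prop :=
  (∀ b c x x' y z, ∑ a, p a b c x y z = ∑ a, p a b c x' y z) ∧
  (∀ a c x y y' z, ∑ b, p a b c x y z = ∑ b, p a b c x y' z) ∧
  (∀ a b x y z z', ∑ c, p a b c x y z = ∑ c, p a b c x y z')

/-! ### Auxiliary lemmas -/

lemma dval_tri (d : ℕ) (x y z : Fin d) : dval d x z ≤ dval d x y + dval d y z := by
  unfold dval
  calc ((x:ℕ) - (z:ℕ) : ZMod d).val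
      = ((((x:ℕ) - (y:ℕ)) + (((y:ℕ) : ZMod d) - (z:ℕ))) : ZMod d).val := by ring_nf
    _ ≤ _ := ZMod.val_add_le _ _

lemma dvalShift_tri_left (d : ℕ) (x y z : Fin d) :
    dvalShift d x z ≤ dval d x y + dvalShift d y z := by
  unfold dval dvalShift
  calc ((x:ℕ) - (z:ℕ) - 1 : ZMod d).val
      = ((((x:ℕ) - (y:ℕ)) + (((y:ℕ) : ZMod d) - (z:ℕ) - 1)) : ZMod d).val := by ring_nf
    _ ≤ _ := ZMod.val_add_le _ _

lemma dvalShift_tri_right (d : ℕ) (x y z : Fin d) :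
    dvalShift d x z ≤ dvalShift d x y + dval d y z := by
  unfold dval dvalShift
  calc ((x:ℕ) - (z:ℕ) - 1 : ZMod d).val
      = ((((x:ℕ) - (y:ℕ) - 1) + (((y:ℕ) : ZMod d) - (z:ℕ))) : ZMod d).val := by ring_nf
    _ ≤ _ := ZMod.val_add_le _ _

lemma dval_add_dvalShift (d : ℕ) (hd : 0 < d) (x y : Fin d) :
    dval d x y + dvalShift d y x = d - 1 := by
  haveI : NeZero d := ⟨hd.ne'⟩
  unfold dval dvalShift
  set u : ZMod d := ((x:ℕ) : ZMod d) - ((y:ℕ) : ZMod d) with hu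
  have h1 : (((y:ℕ) : ZMod d) - ((x:ℕ) : ZMod d) - 1) = -u - 1 := by rw [hu]; ring
  have hvlt : u.val < d := ZMod.val_lt u
  have h2 : ((d - 1 - u.val : ℕ) : ZMod d) = -u - 1 := by
    have h3 : ((u.val : ℕ) : ZMod d) = u := ZMod.natCast_rightInverse u
    have h4 : (d - 1 - u.val) + (u.val + 1) = d := by omega
    have h5 : (((d - 1 - u.val) + (u.val + 1) : ℕ) : ZMod d) = ((d : ℕ) : ZMod d) := by
      rw [h4]
    push_cast at h5
    rw [h3, ZMod.natCast_self] at h5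
    linear_combination h5
  rw [h1, ← h2, ZMod.val_cast_of_lt (by omega)]
  omega

lemma sum3_rotate {d : ℕ} (q : Fin d → Fin d → Fin d → ℝ) :
    ∑ a, ∑ b, ∑ c, q a b c = ∑ b, ∑ c, ∑ a, q a b c := by
  rw [Finset.sum_comm]
  exact Finset.sum_congr rfl fun b _ => Finset.sum_comm

lemma sum3_swap {d : ℕ} (q : Fin d → Fin d → Fin d → ℝ) :
    ∑ a, ∑ b, ∑ c, q a b c = ∑ a, ∑ c, ∑ b, q a b c :=
  Finset.sum_congr rfl fun a _ => Finset.sum_comm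

set_option maxRecDepth 10000 in
/-- If the monogamy relation `I_AB^{2,d} + I_AC^{2,d} ≥ 2(d-1)` holds for every relabeling
of `C`'s measurements of the form `C_1 := C_j`, `C_2 := C_j + 1` (outcome shift), then
`I_AB^{2,d} + ⟨A_i - C_j⟩ + ⟨C_j - A_i⟩ ≥ d - 1` for all `i, j`. -/
theorem monogamy_implies_correlation_bound (d : ℕ) (hd : 2 ≤ d)
    (p : Fin d → Fin d → Fin d → Fin 2 → Fin 2 → Fin 2 → ℝ)
    (hpos : ∀ a b c x y z, 0 ≤ p a b c x y z)
    (hnorm : ∀ x y z, ∑ a, ∑ b, ∑ c, p a b c x y z = 1)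
    (hns : NoSignalingTri d 2 p)
    (hmon : ∀ j : Fin 2,
      BKP d 2 (by omega) (fun a b x y => ∑ c, p a b c x y 0)
        + BKP d 2 (by omega) (fun a c x z =>
            if z = 1 then ∑ b, p a b (c - ⟨1, by omega⟩) x 0 j
            else ∑ b, p a b c x 0 j)
      ≥ 2 * ((d : ℝ) - 1)) :
    ∀ i j : Fin 2,
      BKP d 2 (by omega) (fun a b x y => ∑ c, p a b c x y 0)
        + (∑ a, ∑ c, (dval d a c : ℝ) * ∑ b, p a b c i 0 j)
        + (∑ a, ∑ c, (dval d c a : ℝ) * ∑ b, p a b c i 0 j)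
      ≥ (d : ℝ) - 1 := by
  intro i j
  obtain ⟨hnsA, hnsB, hnsC⟩ := hns
  -- the expectation functional at inputs (x, y, j)
  set E : Fin 2 → Fin 2 → (Fin d → Fin d → Fin d → ℕ) → ℝ :=
    fun x y f => ∑ a, ∑ b, ∑ c, (f a b c : ℝ) * p a b c x y j with hE
  -- basic properties
  have E_mono : ∀ (x y : Fin 2) (f g : Fin d → Fin d → Fin d → ℕ),
      (∀ a b c, f a b c ≤ g a b c) → E x y f ≤ E x y g := by
    intro x y f g hfg
    refine Finset.sum_le_sum fun a _ => Finset.sum_le_sum fun b _ =>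
      Finset.sum_le_sum fun c _ => ?_
    exact mul_le_mul_of_nonneg_right (by exact_mod_cast hfg a b c) (hpos a b c x y j)
  have E_add : ∀ (x y : Fin 2) (f g : Fin d → Fin d → Fin d → ℕ),
      E x y (fun a b c => f a b c + g a b c) = E x y f + E x y g := by
    intro x y f g
    simp only [hE, ← Finset.sum_add_distrib]
    refine Finset.sum_congr rfl fun a _ => Finset.sum_congr rfl fun b _ =>
      Finset.sum_congr rfl fun c _ => ?_
    push_cast; ring
  have E_const : ∀ (x y : Fin 2), E x y (fun _ _ _ => d - 1) = (d : ℝ) - 1 := by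
    intro x y
    rw [hE]
    beta_reduce
    simp only [← Finset.mul_sum]
    rw [hnorm x y j, mul_one]
    push_cast [Nat.cast_sub (by omega : 1 ≤ d)]
    ring
  -- no-signaling for E: changing A's input when f doesn't depend on a
  have E_A : ∀ (x x' y : Fin 2) (F : Fin d → Fin d → ℕ),
      E x y (fun _ b c => F b c) = E x' y (fun _ b c => F b c) := by
    intro x x' y F
    rw [hE]
    beta_reduce
    rw [sum3_rotate, sum3_rotate (fun a b c => (F b c : ℝ) * p a b c x' y j)]
    refine Finset.sum_congr rfl fun b _ => Finset.sum_congr rfl fun c _ => ?_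
    rw [← Finset.mul_sum, ← Finset.mul_sum, hnsA b c x x' y j]
  -- changing B's input when f doesn't depend on b
  have E_B : ∀ (x y y' : Fin 2) (F : Fin d → Fin d → ℕ),
      E x y (fun a _ c => F a c) = E x y' (fun a _ c => F a c) := by
    intro x y y' F
    rw [hE]
    beta_reduce
    rw [sum3_swap, sum3_swap (fun a b c => (F a c : ℝ) * p a b c x y' j)]
    refine Finset.sum_congr rfl fun a _ => Finset.sum_congr rfl fun c _ => ?_
    rw [← Finset.mul_sum, ← Finset.mul_sum, hnsB a c x y y' j]
  -- rewrite the AC correlators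
  have hAC : ∀ (F : Fin d → Fin d → ℕ),
      (∑ a, ∑ c, (F a c : ℝ) * ∑ b, p a b c i 0 j) = E i 0 (fun a _ c => F a c) := by
    intro F
    rw [hE]
    refine Finset.sum_congr rfl fun a _ => ?_
    rw [Finset.sum_comm]
    exact Finset.sum_congr rfl fun c _ => Finset.mul_sum _ _ _
  -- rewrite the AB Bell expression
  have hIAB : BKP d 2 (by omega) (fun a b x y => ∑ c, p a b c x y 0)
      = E 0 0 (fun a b _ => dval d a b) + E 1 0 (fun a b _ => dval d b a)
        + E 1 1 (fun a b _ => dval d a b) + E 0 1 (fun a b _ => dvalShift d b a) := by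
    have hz : ∀ (a b : Fin d) (x y : Fin 2), ∑ c, p a b c x y 0 = ∑ c, p a b c x y j :=
      fun a b x y => hnsC a b x y 0 j
    rw [BKP, Fin.sum_univ_two, hE]
    norm_num
    have e1 : ∀ (v : Fin d → Fin d → ℕ) (x y : Fin 2),
        (∑ a, ∑ b, (v a b : ℝ) * ∑ c, p a b c x y 0)
          = ∑ a, ∑ b, ∑ c, (v a b : ℝ) * p a b c x y j := by
      intro v x y
      refine Finset.sum_congr rfl fun a _ => Finset.sum_congr rfl fun b _ => ?_
      rw [hz, Finset.mul_sum]
    rw [e1, e1, e1, e1]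
    ring
  rw [hIAB, hAC (fun a c => dval d a c), hAC (fun a c => dval d c a)]
  set T00 := E 0 0 (fun a b _ => dval d a b) with hT00
  set T10 := E 1 0 (fun a b _ => dval d b a) with hT10
  set T11 := E 1 1 (fun a b _ => dval d a b) with hT11
  set T01 := E 0 1 (fun a b _ => dvalShift d b a) with hT01
  rw [ge_iff_le]
  have hi : i = 0 ∨ i = 1 := by fin_cases i <;> simp
  rcases hi with rfl | rfl
  · -- i = 0 : chain  d-1 = ⟨A₀-C⟩+⟨C-A₀-1⟩ ≤ ...
    have h0 : (d : ℝ) - 1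
        = E 0 0 (fun a _ c => dval d a c) + E 0 0 (fun a _ c => dvalShift d c a) := by
      rw [← E_add]
      have : (fun (a _ c : Fin d) => dval d a c + dvalShift d c a)
          = fun _ _ _ => d - 1 := by
        funext a b c; exact dval_add_dvalShift d (by omega) a c
      rw [this, E_const]
    have h1 : E 0 0 (fun a _ c => dvalShift d c a) = E 0 1 (fun a _ c => dvalShift d c a) :=
      E_B 0 0 1 (fun a c => dvalShift d c a)
    have h2 : E 0 1 (fun a _ c => dvalShift d c a)
        ≤ E 0 1 (fun a b c => dval d c b + dvalShift d b a) :=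
      E_mono _ _ _ _ (fun a b c => dvalShift_tri_left d c b a)
    have h2' : E 0 1 (fun a b c => dval d c b + dvalShift d b a)
        = E 0 1 (fun _ b c => dval d c b) + T01 := by
      rw [E_add]
    have h3 : E 0 1 (fun _ b c => dval d c b) = E 1 1 (fun _ b c => dval d c b) :=
      E_A 0 1 1 (fun b c => dval d c b)
    have h4 : E 1 1 (fun _ b c => dval d c b)
        ≤ E 1 1 (fun a b c => dval d c a + dval d a b) :=
      E_mono _ _ _ _ (fun a b c => dval_tri d c a b)
    have h4' : E 1 1 (fun a b c => dval d c a + dval d a b)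
        = E 1 1 (fun a _ c => dval d c a) + T11 := by
      rw [E_add]
    have h5 : E 1 1 (fun a _ c => dval d c a) = E 1 0 (fun a _ c => dval d c a) :=
      E_B 1 1 0 (fun a c => dval d c a)
    have h6 : E 1 0 (fun a _ c => dval d c a)
        ≤ E 1 0 (fun a b c => dval d c b + dval d b a) :=
      E_mono _ _ _ _ (fun a b c => dval_tri d c b a)
    have h6' : E 1 0 (fun a b c => dval d c b + dval d b a)
        = E 1 0 (fun _ b c => dval d c b) + T10 := by
      rw [E_add]
    have h7 : E 1 0 (fun _ b c => dval d c b) = E 0 0 (fun _ b c => dval d c b) :=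
      E_A 1 0 0 (fun b c => dval d c b)
    have h8 : E 0 0 (fun _ b c => dval d c b)
        ≤ E 0 0 (fun a b c => dval d c a + dval d a b) :=
      E_mono _ _ _ _ (fun a b c => dval_tri d c a b)
    have h8' : E 0 0 (fun a b c => dval d c a + dval d a b)
        = E 0 0 (fun a _ c => dval d c a) + T00 := by
      rw [E_add]
    linarith
  · -- i = 1 : chain  d-1 = ⟨C-A₁⟩+⟨A₁-C-1⟩ ≤ ...
    have h0 : (d : ℝ) - 1
        = E 1 0 (fun a _ c => dval d c a) + E 1 0 (fun a _ c => dvalShift d a c) := by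
      rw [← E_add]
      have : (fun (a _ c : Fin d) => dval d c a + dvalShift d a c)
          = fun _ _ _ => d - 1 := by
        funext a b c; exact dval_add_dvalShift d (by omega) c a
      rw [this, E_const]
    have h1 : E 1 0 (fun a _ c => dvalShift d a c) = E 1 1 (fun a _ c => dvalShift d a c) :=
      E_B 1 0 1 (fun a c => dvalShift d a c)
    have h2 : E 1 1 (fun a _ c => dvalShift d a c)
        ≤ E 1 1 (fun a b c => dval d a b + dvalShift d b c) :=
      E_mono _ _ _ _ (fun a b c => dvalShift_tri_left d a b c)
    have h2' : E 1 1 (fun a b c => dval d a b + dvalShift d b c)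
        = T11 + E 1 1 (fun _ b c => dvalShift d b c) := by
      rw [E_add]
    have h3 : E 1 1 (fun _ b c => dvalShift d b c) = E 0 1 (fun _ b c => dvalShift d b c) :=
      E_A 1 0 1 (fun b c => dvalShift d b c)
    have h4 : E 0 1 (fun _ b c => dvalShift d b c)
        ≤ E 0 1 (fun a b c => dvalShift d b a + dval d a c) :=
      E_mono _ _ _ _ (fun a b c => dvalShift_tri_right d b a c)
    have h4' : E 0 1 (fun a b c => dvalShift d b a + dval d a c)
        = T01 + E 0 1 (fun a _ c => dval d a c) := by
      rw [E_add]
    have h5 : E 0 1 (fun a _ c => dval d a c) = E 0 0 (fun a _ c => dval d a c) :=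
      E_B 0 1 0 (fun a c => dval d a c)
    have h6 : E 0 0 (fun a _ c => dval d a c)
        ≤ E 0 0 (fun a b c => dval d a b + dval d b c) :=
      E_mono _ _ _ _ (fun a b c => dval_tri d a b c)
    have h6' : E 0 0 (fun a b c => dval d a b + dval d b c)
        = T00 + E 0 0 (fun _ b c => dval d b c) := by
      rw [E_add]
    have h7 : E 0 0 (fun _ b c => dval d b c) = E 1 0 (fun _ b c => dval d b c) :=
      E_A 0 1 0 (fun b c => dval d b c)
    have h8 : E 1 0 (fun _ b c => dval d b c)
        ≤ E 1 0 (fun a b c => dval d b a + dval d a c) :=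
      E_mono _ _ _ _ (fun a b c => dval_tri d b a c)
    have h8' : E 1 0 (fun a b c => dval d b a + dval d a c)
        = T10 + E 1 0 (fun a _ c => dval d a c) := by
      rw [E_add]
    linarith
end
end
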